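/- arXiv:2502.14329 — 3 statements merged into one kernel-verified Lean document; each statement's English description precedes it below -/
import Mathlib

section
/- Let 𝐂 be a full semi-AFL, G a finitely generated group, and H ≤ G a subgroup of finite index. Then, for each • ∈ {∀, ∃}: G is 𝐂^•-flat (as a group) if and only if H is 𝐂^•-flat (as a group). -/
/-!  Common framework: classes of languages over finite alphabets, `C^∀`- and
`C^∃`-subsets of finitely generated monoids and groups, closure properties
(cone, full semi-AFL), and `C^•`-flatness.  -/

/-- A class of languages: for each finite alphabet `Fin n`, a collection of languages over it. -/
abbrev LangClass : Type := ∀ n : ℕ, Set (Set (List (Fin n)))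

/-- `π` is a surjective monoid homomorphism from the free monoid on `Fin n`
(words, under concatenation) onto `M`; i.e. it presents `M` as a monoid generated
by the finite set `Fin n`. -/
structure FreeHomOnto {n : ℕ} (M : Type) [Monoid M] (π : List (Fin n) → M) : Prop where
  map_nil : π [] = 1
  map_append : ∀ u v : List (Fin n), π (u ++ v) = π u * π v
  surjective : Function.Surjective π

/-- `X ⊆ M` is a `C^∀`-subset of `M` w.r.t. the generating map `π`:
the full preimage `π⁻¹(X)` is a language of the class `C`. -/
def CForall (C : LangClass) {n : ℕ} {M : Type} [Monoid M]
    (π : List (Fin n) → M) (X : Set M) : Prop :=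
  {w : List (Fin n) | π w ∈ X} ∈ C n

/-- `X ⊆ M` is a `C^∃`-subset of `M` w.r.t. the generating map `π`:
some language of the class `C` is mapped onto `X` by `π`. -/
def CExists (C : LangClass) {n : ℕ} {M : Type} [Monoid M]
    (π : List (Fin n) → M) (X : Set M) : Prop :=
  ∃ L ∈ C n, π '' L = X

/-- Closure under inverse images of homomorphisms of free monoids on finite alphabets.
Such a homomorphism is determined by its values `f i` on letters, sending `w` to `w.flatMap f`. -/
def ClosedUnderInvHom (C : LangClass) : Prop :=
  ∀ (m n : ℕ) (f : Fin m → List (Fin n)), ∀ L ∈ C n,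
    {w : List (Fin m) | w.flatMap f ∈ L} ∈ C m

/-- Closure under images of homomorphisms of free monoids on finite alphabets. -/
def ClosedUnderHom (C : LangClass) : Prop :=
  ∀ (m n : ℕ) (f : Fin m → List (Fin n)), ∀ L ∈ C m,
    (fun w : List (Fin m) => w.flatMap f) '' L ∈ C n

/-- A language over `Fin n` is regular if it is accepted by a DFA with finitely many states. -/
def IsRegularLang {n : ℕ} (L : Set (List (Fin n))) : Prop :=
  ∃ (σ : Type) (_ : Fintype σ) (A : DFA (Fin n) σ), ∀ w : List (Fin n), w ∈ A.accepts ↔ w ∈ L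

/-- Closure under intersection with regular languages. -/
def ClosedUnderInterReg (C : LangClass) : Prop :=
  ∀ (n : ℕ), ∀ L ∈ C n, ∀ R : Set (List (Fin n)), IsRegularLang R → L ∩ R ∈ C n

/-- Closure under (binary) union. -/
def ClosedUnderUnion (C : LangClass) : Prop :=
  ∀ (n : ℕ), ∀ L₁ ∈ C n, ∀ L₂ ∈ C n, L₁ ∪ L₂ ∈ C n

/-- A cone: a class of languages closed under homomorphisms, inverse homomorphisms,
and intersection with regular languages. -/
def IsCone (C : LangClass) : Prop :=
  ClosedUnderHom C ∧ ClosedUnderInvHom C ∧ ClosedUnderInterReg C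

/-- A full semi-AFL: a cone closed under union. -/
def IsFullSemiAFL (C : LangClass) : Prop :=
  IsCone C ∧ ClosedUnderUnion C

/-- `G` is `C^∀`-flat as a group: for every finitely generated subgroup `H ≤ G`
(presented by a finite monoid generating map `ρ`), a subset of `H` is a `C^∀`-subset
of `G` iff it is a `C^∀`-subset of `H`; i.e. `C^∀(G | H) = C^∀(H)`. -/
def GroupCForallFlat (C : LangClass) (G : Type) [Group G] : Prop :=
  ∀ (H : Subgroup G) (n k : ℕ) (π : List (Fin n) → G) (ρ : List (Fin k) → ↥H),
    FreeHomOnto G π → FreeHomOnto (↥H) ρ →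
      ∀ X : Set G, X ⊆ (H : Set G) →
        (CForall C π X ↔ CForall C ρ (Subtype.val ⁻¹' X))

/-- `G` is `C^∃`-flat as a group: for every finitely generated subgroup `H ≤ G`,
a subset of `H` is a `C^∃`-subset of `G` iff it is a `C^∃`-subset of `H`;
i.e. `C^∃(G | H) = C^∃(H)`. -/
def GroupCExistsFlat (C : LangClass) (G : Type) [Group G] : Prop :=
  ∀ (H : Subgroup G) (n k : ℕ) (π : List (Fin n) → G) (ρ : List (Fin k) → ↥H),
    FreeHomOnto G π → FreeHomOnto (↥H) ρ →
      ∀ X : Set G, X ⊆ (H : Set G) →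
        (CExists C π X ↔ CExists C ρ (Subtype.val ⁻¹' X))

/-- `M` is `C^∀`-flat as a monoid: for every finitely generated submonoid `N ≤ M`,
a subset of `N` is a `C^∀`-subset of `M` iff it is a `C^∀`-subset of `N`;
i.e. `C^∀(M | N) = C^∀(N)`. -/
def MonoidCForallFlat (C : LangClass) (M : Type) [Monoid M] : Prop :=
  ∀ (N : Submonoid M) (n k : ℕ) (π : List (Fin n) → M) (ρ : List (Fin k) → ↥N),
    FreeHomOnto M π → FreeHomOnto (↥N) ρ →
      ∀ X : Set M, X ⊆ (N : Set M) →
        (CForall C π X ↔ CForall C ρ (Subtype.val ⁻¹' X))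

/-- `M` is `C^∃`-flat as a monoid: for every finitely generated submonoid `N ≤ M`,
a subset of `N` is a `C^∃`-subset of `M` iff it is a `C^∃`-subset of `N`;
i.e. `C^∃(M | N) = C^∃(N)`. -/
def MonoidCExistsFlat (C : LangClass) (M : Type) [Monoid M] : Prop :=
  ∀ (N : Submonoid M) (n k : ℕ) (π : List (Fin n) → M) (ρ : List (Fin k) → ↥N),
    FreeHomOnto M π → FreeHomOnto (↥N) ρ →
      ∀ X : Set M, X ⊆ (N : Set M) →
        (CExists C π X ↔ CExists C ρ (Subtype.val ⁻¹' X))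

/-!
Both kinds of `C`-subsets are independent of the finite generating set (a cone is closed under
homomorphisms and inverse homomorphisms), stable under right translation (replace a suffix
through a marker letter), under intersection with sets whose word problem is regular, and,
for a full semi-AFL, under finite unions.

The key point is that `C^•(G | H) = C^•(H)` whenever `H` has finite index. Read `H` through
its Reidemeister–Schreier presentation, whose letters are the pairs (coset, generator of `G`).
A word of `G` representing an element of `H` lifts to a closed path of the Schreier
graph through the coset `H`. These paths form a regular language, on which forgetting the
cosets and evaluating in `H` agree.

Hence a subgroup `K ≤ H` can be read in `G` or in `H` alike, so flatness passes from `G` to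
`H`. Conversely, a subset `X` of a finitely generated `K ≤ G` is the finite union of the
pieces `X ∩ H k` (`k ∈ K`). Each piece is a translate of a subset of `H ∩ K`, which can be
carried from `G` to `H` to `H ∩ K ≤ H` to `H ∩ K ≤ K` to `K`. The last step uses that
`H ∩ K` has finite index in `K`.
-/

namespace FreeHomOnto

variable {n : ℕ} {M : Type} [Monoid M] {π : List (Fin n) → M}

theorem map_cons (hπ : FreeHomOnto M π) (a : Fin n) (w : List (Fin n)) :
    π (a :: w) = π [a] * π w :=
  hπ.map_append [a] w

theorem exists_flatMap_eq (hπ : FreeHomOnto M π) {k : ℕ} {N : Type} [Monoid N]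
    {ρ : List (Fin k) → N} (hρ : FreeHomOnto N ρ) (φ : N →* M) :
    ∃ f : Fin k → List (Fin n), ∀ w, π (w.flatMap f) = φ (ρ w) := by
  choose f hf using fun a => hπ.surjective (φ (ρ [a]))
  refine ⟨f, fun w => ?_⟩
  induction w with
  | nil => simp [hπ.map_nil, hρ.map_nil]
  | cons a w ih => rw [List.flatMap_cons, hπ.map_append, ih, hf, ← map_mul, ← hρ.map_cons]

theorem mulEquiv (hπ : FreeHomOnto M π) {M' : Type} [Monoid M'] (φ : M ≃* M') :
    FreeHomOnto M' (fun w => φ (π w)) where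
  map_nil := by rw [hπ.map_nil, map_one]
  map_append u v := by rw [hπ.map_append, map_mul]
  surjective := φ.surjective.comp hπ.surjective

end FreeHomOnto

section RegularLanguages

def actionDFA {n : ℕ} {M Q : Type} [Group M] [MulAction M Q] (π : List (Fin n) → M) (q₀ : Q)
    (F : Set Q) : DFA (Fin n) Q :=
  ⟨fun q a => (π [a])⁻¹ • q, q₀, F⟩

theorem actionDFA_evalFrom {n : ℕ} {M Q : Type} [Group M] [MulAction M Q] {π : List (Fin n) → M}
    (hπ : FreeHomOnto M π) (q₀ : Q) (F : Set Q) (w : List (Fin n)) (q : Q) :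
    (actionDFA π q₀ F).evalFrom q w = (π w)⁻¹ • q := by
  induction w generalizing q with
  | nil => simp [hπ.map_nil]
  | cons a w ih =>
    rw [DFA.evalFrom_cons, ih, hπ.map_cons, mul_inv_rev, mul_smul]
    rfl

theorem isRegularLang_rightCoset {n : ℕ} {M : Type} [Group M] {π : List (Fin n) → M}
    (hπ : FreeHomOnto M π) (H : Subgroup M) [H.FiniteIndex] (g : M) :
    IsRegularLang {w | π w * g⁻¹ ∈ H} := by
  refine ⟨M ⧸ H, Fintype.ofFinite _, actionDFA π ((1 : M) : M ⧸ H) {((g⁻¹ : M) : M ⧸ H)},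
    fun w => ?_⟩
  rw [DFA.mem_accepts, DFA.eval, actionDFA_evalFrom hπ]
  change (π w)⁻¹ • ((1 : M) : M ⧸ H) = ((g⁻¹ : M) : M ⧸ H) ↔ _
  rw [MulAction.Quotient.smul_mk, smul_eq_mul, mul_one, QuotientGroup.eq, inv_inv]
  rfl

end RegularLanguages

section Marker

variable (n : ℕ)

def markerLang : Set (List (Fin (n + 1))) :=
  Set.range fun w : List (Fin n) => w.map Fin.castSucc ++ [Fin.last n]

/-- States: `some false` before the marker, `some true` right after it, `none` dead. -/
def markerDFA : DFA (Fin (n + 1)) (Option Bool) :=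
  ⟨fun s a => if s = some false then some (decide (a = Fin.last n)) else none, some false,
    {some true}⟩

def markerSubst (u : List (Fin n)) : Fin (n + 1) → List (Fin n) :=
  Fin.lastCases u fun i => [i]

variable {n}

theorem flatMap_markerSubst (u w : List (Fin n)) :
    (w.map Fin.castSucc ++ [Fin.last n]).flatMap (markerSubst n u) = w ++ u := by
  simp [markerSubst, List.flatMap_map]

theorem last_cons_mem_markerLang {v : List (Fin (n + 1))} :
    Fin.last n :: v ∈ markerLang n ↔ v = [] := by
  constructor
  · rintro ⟨_ | ⟨b, w⟩, h⟩
    · simpa using h.symm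
    · exact absurd (List.cons_eq_cons.mp h).1 (Fin.castSucc_ne_last b)
  · rintro rfl
    exact ⟨[], rfl⟩

theorem castSucc_cons_mem_markerLang {i : Fin n} {v : List (Fin (n + 1))} :
    i.castSucc :: v ∈ markerLang n ↔ v ∈ markerLang n := by
  constructor
  · rintro ⟨_ | ⟨b, w⟩, h⟩
    · exact absurd (List.cons_eq_cons.mp h).1 (Fin.castSucc_ne_last i).symm
    · exact ⟨w, (List.cons_eq_cons.mp h).2⟩
  · rintro ⟨w, rfl⟩
    exact ⟨i :: w, rfl⟩

theorem markerDFA_evalFrom_none (v : List (Fin (n + 1))) :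
    (markerDFA n).evalFrom none v = none := by
  induction v with
  | nil => rfl
  | cons a v ih => exact ih

theorem markerDFA_evalFrom_eq_some_true_iff (v : List (Fin (n + 1))) :
    (markerDFA n).evalFrom (some false) v = some true ↔ v ∈ markerLang n := by
  induction v with
  | nil => simp [markerLang]
  | cons a v ih =>
    induction a using Fin.lastCases with
    | last =>
      have hstep : (markerDFA n).step (some false) (Fin.last n) = some true := by simp [markerDFA]
      rw [last_cons_mem_markerLang, DFA.evalFrom_cons, hstep]
      cases v with
      | nil => simp
      | cons b v =>
        have hdead : (markerDFA n).step (some true) b = none := by simp [markerDFA]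
        simp [hdead, markerDFA_evalFrom_none]
    | cast i =>
      rw [castSucc_cons_mem_markerLang, ← ih]
      simp [markerDFA, Fin.castSucc_ne_last]

theorem isRegularLang_markerLang : IsRegularLang (markerLang n) :=
  ⟨Option Bool, inferInstance, markerDFA n, markerDFA_evalFrom_eq_some_true_iff⟩

end Marker

section Cones

variable {C : LangClass}

theorem IsCone.image_append_mem (hC : IsCone C) {n : ℕ} {L : Set (List (Fin n))} (hL : L ∈ C n)
    (u₁ u₂ : List (Fin n)) : (· ++ u₂) '' {w | w ++ u₁ ∈ L} ∈ C n := by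
  obtain ⟨hHom, hInvHom, hInter⟩ := hC
  have hmem := hHom _ _ (markerSubst n u₂) _
    (hInter _ _ (hInvHom _ _ (markerSubst n u₁) L hL) _ isRegularLang_markerLang)
  rw [markerLang, ← Set.image_preimage_eq_inter_range, Set.image_image] at hmem
  simpa only [Set.preimage_ofPred_eq, flatMap_markerSubst] using hmem

theorem ClosedUnderUnion.sUnion_mem (hU : ClosedUnderUnion C) {n : ℕ}
    {𝓛 : Set (Set (List (Fin n)))} (hfin : 𝓛.Finite) (hne : 𝓛.Nonempty) (h𝓛 : 𝓛 ⊆ C n) :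
    ⋃₀ 𝓛 ∈ C n := by
  induction 𝓛, hfin using Set.Finite.induction_on with
  | empty => exact absurd hne Set.not_nonempty_empty
  | @insert L 𝓛 _ _ ih =>
    rw [Set.sUnion_insert]
    rcases 𝓛.eq_empty_or_nonempty with rfl | h𝓛ne
    · simpa using h𝓛 (Set.mem_insert L ∅)
    · exact hU n _ (h𝓛 (Set.mem_insert L 𝓛)) _
        (ih h𝓛ne ((Set.subset_insert L 𝓛).trans h𝓛))

end Cones

structure IsRegularSection {n k : ℕ} {M : Type} [Group M] {H : Subgroup M}
    (π : List (Fin n) → M) (ρ : List (Fin k) → H) (p : Fin k → List (Fin n))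
    (R : Set (List (Fin k))) : Prop where
  isRegularLang : IsRegularLang R
  map_flatMap : ∀ v ∈ R, π (v.flatMap p) = ρ v
  exists_mem : ∀ w, π w ∈ H → ∃ v ∈ R, v.flatMap p = w

namespace IsRegularSection

variable {C : LangClass} {n k : ℕ} {M : Type} [Group M] {H : Subgroup M}
  {π : List (Fin n) → M} {ρ : List (Fin k) → H} {p : Fin k → List (Fin n)}
  {R : Set (List (Fin k))}

theorem surjective (hsec : IsRegularSection π ρ p R) (hπ : Function.Surjective π) :
    Function.Surjective ρ := by
  intro x
  obtain ⟨w, hw⟩ := hπ x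
  obtain ⟨v, hvR, rfl⟩ := hsec.exists_mem w (hw ▸ x.2)
  exact ⟨v, Subtype.ext ((hsec.map_flatMap v hvR).symm.trans hw)⟩

theorem cForall_iff (hsec : IsRegularSection π ρ p R) (hC : IsCone C) (hπ : FreeHomOnto M π)
    (hρ : FreeHomOnto H ρ) {X : Set M} (hX : X ⊆ H) :
    CForall C π X ↔ CForall C ρ (Subtype.val ⁻¹' X) := by
  constructor
  · intro hXπ
    obtain ⟨f, hf⟩ := hπ.exists_flatMap_eq hρ H.subtype
    have hpre : {v | ρ v ∈ Subtype.val ⁻¹' X} = {v | v.flatMap f ∈ {w | π w ∈ X}} := by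
      ext v
      simp [hf]
    rw [CForall, hpre]
    exact hC.2.1 k n f _ hXπ
  · intro hXρ
    have himage : (fun v => v.flatMap p) '' ({v | ρ v ∈ Subtype.val ⁻¹' X} ∩ R) =
        {w | π w ∈ X} := by
      ext w
      constructor
      · rintro ⟨v, ⟨hvX, hvR⟩, rfl⟩
        simpa [hsec.map_flatMap v hvR] using hvX
      · intro hw
        obtain ⟨v, hvR, rfl⟩ := hsec.exists_mem w (hX hw)
        exact ⟨v, ⟨by simpa [hsec.map_flatMap v hvR] using hw, hvR⟩, rfl⟩
    rw [CForall, ← himage]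
    exact hC.1 k n p _ (hC.2.2 k _ hXρ R hsec.isRegularLang)

theorem cExists_iff (hsec : IsRegularSection π ρ p R) (hC : IsCone C) (hπ : FreeHomOnto M π)
    (hρ : FreeHomOnto H ρ) {X : Set M} (hX : X ⊆ H) :
    CExists C π X ↔ CExists C ρ (Subtype.val ⁻¹' X) := by
  constructor
  · rintro ⟨L, hL, rfl⟩
    refine ⟨{v | v.flatMap p ∈ L} ∩ R, hC.2.2 k _ (hC.2.1 k n p L hL) R hsec.isRegularLang, ?_⟩
    ext x
    constructor
    · rintro ⟨v, ⟨hvL, hvR⟩, rfl⟩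
      exact ⟨_, hvL, hsec.map_flatMap v hvR⟩
    · rintro ⟨w, hwL, hwx⟩
      obtain ⟨v, hvR, rfl⟩ := hsec.exists_mem w (hwx ▸ x.2)
      exact ⟨v, ⟨hwL, hvR⟩, Subtype.ext ((hsec.map_flatMap v hvR).symm.trans hwx)⟩
  · rintro ⟨L, hL, hLX⟩
    obtain ⟨f, hf⟩ := hπ.exists_flatMap_eq hρ H.subtype
    refine ⟨(fun v => v.flatMap f) '' L, hC.1 k n f L hL, ?_⟩
    rw [Set.image_image, Set.image_congr fun v _ => hf v, ← Set.image_image (f := ρ), hLX]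
    exact Set.image_preimage_eq_of_subset (by simpa using hX)

end IsRegularSection

section Schreier

variable {n : ℕ} {M : Type} [Group M]

open Classical in
-- Picking `1` on `H` itself makes closed paths at `H` take the same value in both presentations.
noncomputable def cosetRep (H : Subgroup M) (q : M ⧸ H) : M :=
  if q = ((1 : M) : M ⧸ H) then 1 else q.out

theorem cosetRep_one (H : Subgroup M) : cosetRep H ((1 : M) : M ⧸ H) = 1 :=
  if_pos rfl

theorem mk_cosetRep (H : Subgroup M) (q : M ⧸ H) : ((cosetRep H q : M) : M ⧸ H) = q := by
  unfold cosetRep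
  split_ifs with hq
  · exact hq.symm
  · exact q.out_eq'

theorem cosetRep_inv_mul_mul_cosetRep_mem (H : Subgroup M) (g : M) (q : M ⧸ H) :
    (cosetRep H q)⁻¹ * g * cosetRep H (g⁻¹ • q) ∈ H := by
  have hcoset : ((cosetRep H (g⁻¹ • q) : M) : M ⧸ H) = ((g⁻¹ * cosetRep H q : M) : M ⧸ H) := by
    rw [mk_cosetRep, ← smul_eq_mul, ← MulAction.Quotient.smul_mk, mk_cosetRep]
  simpa [mul_assoc] using QuotientGroup.eq.mp hcoset.symm

variable (π : List (Fin n) → M) (H : Subgroup M) [H.FiniteIndex]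

noncomputable def schreierLetter : Fin (Nat.card ((M ⧸ H) × Fin n)) ≃ (M ⧸ H) × Fin n :=
  (Finite.equivFin _).symm

noncomputable def schreierGen (b : Fin (Nat.card ((M ⧸ H) × Fin n))) : H :=
  ⟨(cosetRep H (schreierLetter H b).1)⁻¹ * π [(schreierLetter H b).2] *
      cosetRep H ((π [(schreierLetter H b).2])⁻¹ • (schreierLetter H b).1),
    cosetRep_inv_mul_mul_cosetRep_mem H _ _⟩

noncomputable def schreierPres (v : List (Fin (Nat.card ((M ⧸ H) × Fin n)))) : H :=
  (v.map (schreierGen π H)).prod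

open Classical in
/-- Accepts the closed paths at the coset `H` in the Schreier graph; `none` is a dead state. -/
noncomputable def schreierDFA : DFA (Fin (Nat.card ((M ⧸ H) × Fin n))) (Option (M ⧸ H)) :=
  ⟨fun s b => s.bind fun q =>
      if (schreierLetter H b).1 = q then some ((π [(schreierLetter H b).2])⁻¹ • q) else none,
    some ((1 : M) : M ⧸ H), {some ((1 : M) : M ⧸ H)}⟩

noncomputable def schreierProj (b : Fin (Nat.card ((M ⧸ H) × Fin n))) : List (Fin n) :=
  [(schreierLetter H b).2]

noncomputable def schreierLift : M ⧸ H → List (Fin n) → List (Fin (Nat.card ((M ⧸ H) × Fin n)))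
  | _, [] => []
  | q, a :: w => (schreierLetter H).symm (q, a) :: schreierLift ((π [a])⁻¹ • q) w

variable {π H}

theorem schreierDFA_evalFrom_none (v : List (Fin (Nat.card ((M ⧸ H) × Fin n)))) :
    (schreierDFA π H).evalFrom none v = none := by
  induction v with
  | nil => rfl
  | cons b v ih => exact ih

theorem schreierPres_eq_of_evalFrom (hπ : FreeHomOnto M π)
    (v : List (Fin (Nat.card ((M ⧸ H) × Fin n)))) (q q' : M ⧸ H)
    (hv : (schreierDFA π H).evalFrom (some q) v = some q') :
    (schreierPres π H v : M) =
      (cosetRep H q)⁻¹ * π (v.flatMap (schreierProj H)) * cosetRep H q' := by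
  induction v generalizing q with
  | nil =>
    obtain rfl : q = q' := Option.some_injective _ hv
    simp [schreierPres, hπ.map_nil]
  | cons b v ih =>
    rcases hb : schreierLetter H b with ⟨q₁, a⟩
    by_cases hq : q₁ = q
    · subst hq
      have hstep : (schreierDFA π H).step (some q₁) b = some ((π [a])⁻¹ • q₁) := by
        simp [schreierDFA, hb]
      rw [DFA.evalFrom_cons, hstep] at hv
      have hgen : (schreierGen π H b : M) =
          (cosetRep H q₁)⁻¹ * π [a] * cosetRep H ((π [a])⁻¹ • q₁) := by
        simp [schreierGen, hb]
      rw [schreierPres, List.map_cons, List.prod_cons, Subgroup.coe_mul, hgen, ← schreierPres,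
        ih _ hv, List.flatMap_cons, schreierProj, hb, hπ.map_append]
      group
    · have hstep : (schreierDFA π H).step (some q) b = none := by
        simp [schreierDFA, hb, hq]
      rw [DFA.evalFrom_cons, hstep, schreierDFA_evalFrom_none] at hv
      exact absurd hv (Option.some_ne_none q').symm

theorem schreierDFA_evalFrom_lift (hπ : FreeHomOnto M π) (w : List (Fin n)) (q : M ⧸ H) :
    (schreierDFA π H).evalFrom (some q) (schreierLift π H q w) = some ((π w)⁻¹ • q) := by
  induction w generalizing q with
  | nil => simp [schreierLift, hπ.map_nil]
  | cons a w ih =>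
    have hstep : (schreierDFA π H).step (some q) ((schreierLetter H).symm (q, a)) =
        some ((π [a])⁻¹ • q) := by
      simp [schreierDFA]
    rw [schreierLift, DFA.evalFrom_cons, hstep, ih, hπ.map_cons a w, mul_inv_rev, mul_smul]

theorem flatMap_schreierProj_lift (w : List (Fin n)) (q : M ⧸ H) :
    (schreierLift π H q w).flatMap (schreierProj H) = w := by
  induction w generalizing q with
  | nil => rfl
  | cons a w ih => simp [schreierLift, schreierProj, ih]

theorem isRegularSection_schreier (hπ : FreeHomOnto M π) :
    IsRegularSection π (schreierPres π H) (schreierProj H)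
      {v | (schreierDFA π H).evalFrom (some ((1 : M) : M ⧸ H)) v = some ((1 : M) : M ⧸ H)} where
  isRegularLang := ⟨_, Fintype.ofFinite _, schreierDFA π H, fun _ => Iff.rfl⟩
  map_flatMap v hv := by
    rw [schreierPres_eq_of_evalFrom hπ v _ _ hv, cosetRep_one]
    group
  exists_mem w hw := by
    refine ⟨schreierLift π H ((1 : M) : M ⧸ H) w, ?_, flatMap_schreierProj_lift w _⟩
    have hfix : (π w)⁻¹ • ((1 : M) : M ⧸ H) = ((1 : M) : M ⧸ H) := by
      rw [MulAction.Quotient.smul_mk, smul_eq_mul, mul_one, QuotientGroup.eq]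
      simpa using hw
    rw [Set.mem_ofPred_eq, schreierDFA_evalFrom_lift hπ, hfix]

theorem freeHomOnto_schreierPres (hπ : FreeHomOnto M π) : FreeHomOnto H (schreierPres π H) where
  map_nil := rfl
  map_append u v := by simp [schreierPres]
  surjective := (isRegularSection_schreier hπ).surjective hπ.surjective

end Schreier

/-- A notion of distinguished subset of a group, read through a presentation, such as
`CForall C` or `CExists C`. The binders are strict implicit so that `S` is not eta-expanded when
passed as an argument. -/
abbrev SubsetPred : Type 1 :=
  ∀ ⦃n : ℕ⦄ ⦃M : Type⦄ [Group M], (List (Fin n) → M) → Set M → Prop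

/-- `S(G | K) = S(K)`. -/
def FlatAt (S : SubsetPred) {G : Type} [Group G] (K : Subgroup G) : Prop :=
  ∀ (n k : ℕ) (π : List (Fin n) → G) (ρ : List (Fin k) → K), FreeHomOnto G π → FreeHomOnto K ρ →
    ∀ X : Set G, X ⊆ K → (S π X ↔ S ρ (Subtype.val ⁻¹' X))

def GroupFlat (S : SubsetPred) (G : Type) [Group G] : Prop :=
  ∀ K : Subgroup G, FlatAt S K

structure SubsetPred.IsAdmissible (S : SubsetPred) : Prop where
  preimage_mulEquiv_iff : ∀ {k : ℕ} {M M' : Type} [Group M] [Group M'] (ρ : List (Fin k) → M)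
    (φ : M ≃* M') (Y : Set M'), S ρ (φ ⁻¹' Y) ↔ S (fun w => φ (ρ w)) Y
  mul_right : ∀ {n : ℕ} {M : Type} [Group M] {π : List (Fin n) → M}, FreeHomOnto M π →
    ∀ (g : M) (X : Set M), S π X → S π {x | x * g ∈ X}
  inter : ∀ {n : ℕ} {M : Type} [Group M] {π : List (Fin n) → M} {X Z : Set M},
    IsRegularLang {w | π w ∈ Z} → S π X → S π (X ∩ Z)
  sUnion : ∀ {n : ℕ} {M : Type} [Group M] {π : List (Fin n) → M} {𝒴 : Set (Set M)},
    𝒴.Finite → 𝒴.Nonempty → (∀ Y ∈ 𝒴, S π Y) → S π (⋃₀ 𝒴)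
  flatAt : ∀ {M : Type} [Group M] (H : Subgroup M) [H.FiniteIndex], FlatAt S H

def Subgroup.subgroupOfCommEquiv {G : Type} [Group G] (H K : Subgroup G) :
    H.subgroupOf K ≃* K.subgroupOf H where
  toFun x := ⟨⟨x.1, Subgroup.mem_subgroupOf.mp x.2⟩, Subgroup.mem_subgroupOf.mpr x.1.2⟩
  invFun x := ⟨⟨x.1, Subgroup.mem_subgroupOf.mp x.2⟩, Subgroup.mem_subgroupOf.mpr x.1.2⟩
  left_inv _ := rfl
  right_inv _ := rfl
  map_mul' _ _ := rfl

namespace SubsetPred.IsAdmissible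

variable {S : SubsetPred} {n : ℕ} {G : Type} [Group G] {π : List (Fin n) → G}

theorem mul_right_iff (hS : S.IsAdmissible) (hπ : FreeHomOnto G π) (g : G) (X : Set G) :
    S π {x | x * g ∈ X} ↔ S π X :=
  ⟨fun h => by simpa using hS.mul_right hπ g⁻¹ _ h, hS.mul_right hπ g X⟩

theorem iff_forall_mul_right_inter (hS : S.IsAdmissible) (hπ : FreeHomOnto G π)
    (H : Subgroup G) [H.FiniteIndex] {ι : Type} [Nonempty ι] (r : ι → G) {X : Set G}
    (hX : ∀ x ∈ X, ∃ i, x * (r i)⁻¹ ∈ H) :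
    S π X ↔ ∀ i, S π ({x | x * r i ∈ X} ∩ H) := by
  set piece : ι → Set G := fun i => X ∩ {x | x * (r i)⁻¹ ∈ H}
  have hpiece (i : ι) : {x | x * r i ∈ X} ∩ H = {x | x * r i ∈ piece i} := by
    ext x
    simp [piece]
  simp_rw [hpiece, hS.mul_right_iff hπ]
  refine ⟨fun h i => hS.inter (isRegularLang_rightCoset hπ H (r i)) h, fun h => ?_⟩
  have hX_eq : X = ⋃₀ Set.range piece := by
    ext x
    simp only [Set.sUnion_range, Set.mem_iUnion, piece, Set.mem_inter_iff]
    exact ⟨fun hx => (hX x hx).imp fun i hi => ⟨hx, hi⟩, fun ⟨_, hx, _⟩ => hx⟩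
  -- a piece only depends on the left coset of `(r i)⁻¹`
  have hfin : (Set.range piece).Finite := by
    refine (Set.finite_range fun q : G ⧸ H => X ∩ {x | ((x⁻¹ : G) : G ⧸ H) = q}).subset ?_
    rintro _ ⟨i, rfl⟩
    refine ⟨((r i)⁻¹ : G), ?_⟩
    ext x
    simp [piece, QuotientGroup.eq]
  rw [hX_eq]
  exact hS.sUnion hfin (Set.range_nonempty piece) (Set.forall_mem_range.mpr h)

theorem iff_of_subset_inf (hS : S.IsAdmissible) {H : Subgroup G} [H.FiniteIndex]
    (hH : GroupFlat S H) {K : Subgroup G} {k : ℕ} {ρ : List (Fin k) → K}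
    (hπ : FreeHomOnto G π) (hρ : FreeHomOnto K ρ) {Y : Set G} (hYH : Y ⊆ H) (hYK : Y ⊆ K) :
    S π Y ↔ S ρ (Subtype.val ⁻¹' Y) := by
  have hρH := freeHomOnto_schreierPres (H := H) hπ
  have hρHK := freeHomOnto_schreierPres (H := H.subgroupOf K) hρ
  calc S π Y ↔ S (schreierPres π H) (Subtype.val ⁻¹' Y) := hS.flatAt H _ _ _ _ hπ hρH Y hYH
    _ ↔ S (fun w => H.subgroupOfCommEquiv K (schreierPres ρ (H.subgroupOf K) w))
          (Subtype.val ⁻¹' (Subtype.val ⁻¹' Y)) :=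
      hH (K.subgroupOf H) _ _ _ _ hρH (hρHK.mulEquiv _) _ fun x hx => hYK hx
    _ ↔ S (schreierPres ρ (H.subgroupOf K)) (Subtype.val ⁻¹' (Subtype.val ⁻¹' Y)) :=
      (hS.preimage_mulEquiv_iff _ (H.subgroupOfCommEquiv K) _).symm
    _ ↔ S ρ (Subtype.val ⁻¹' Y) :=
      (hS.flatAt (H.subgroupOf K) _ _ _ _ hρ hρHK _ fun x hx => hYH hx).symm

theorem groupFlat_subgroup_of_groupFlat (hS : S.IsAdmissible)
    (hG : ∃ (n : ℕ) (π : List (Fin n) → G), FreeHomOnto G π) (H : Subgroup G) [H.FiniteIndex]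
    (hflat : GroupFlat S G) : GroupFlat S H := by
  intro K n k πH ρ hπH hρ X hXK
  obtain ⟨N, πG, hπG⟩ := hG
  set e := K.equivMapOfInjective H.subtype H.subtype_injective
  have hXH : Subtype.val ⁻¹' (Subtype.val '' X) = X := Set.preimage_image_eq X Subtype.val_injective
  have hXe : e ⁻¹' (Subtype.val ⁻¹' (Subtype.val '' X)) = Subtype.val ⁻¹' X := by
    ext x
    simp [e, Subgroup.coe_equivMapOfInjective_apply]
  calc S πH X ↔ S πG (Subtype.val '' X) := by
        rw [hS.flatAt H N n πG πH hπG hπH (Subtype.val '' X)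
          (Set.image_subset_iff.mpr fun x _ => x.2), hXH]
    _ ↔ S (fun w => e (ρ w)) (Subtype.val ⁻¹' (Subtype.val '' X)) :=
      hflat (K.map H.subtype) N k πG _ hπG (hρ.mulEquiv e) _ <| by
        rintro _ ⟨x, hx, rfl⟩
        exact ⟨x, hXK hx, rfl⟩
    _ ↔ S ρ (Subtype.val ⁻¹' X) := by rw [← hS.preimage_mulEquiv_iff, hXe]

theorem groupFlat_of_groupFlat_subgroup (hS : S.IsAdmissible) (H : Subgroup G) [H.FiniteIndex]
    (hH : GroupFlat S H) : GroupFlat S G := by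
  intro K n k π ρ hπ hρ X hXK
  rw [hS.iff_forall_mul_right_inter hπ H (ι := K) Subtype.val fun x hx => ⟨⟨x, hXK hx⟩, by simp⟩,
    hS.iff_forall_mul_right_inter hρ (H.subgroupOf K) (ι := K) id fun x _ => ⟨x, by simp⟩]
  refine forall_congr' fun g => ?_
  have hpre : {x : K | x * id g ∈ Subtype.val ⁻¹' X} ∩ H.subgroupOf K =
      Subtype.val ⁻¹' ({x : G | x * g ∈ X} ∩ H) := by
    ext x
    simp [Subgroup.mem_subgroupOf]
  rw [hpre]
  refine hS.iff_of_subset_inf hH hπ hρ Set.inter_subset_right fun x hx => ?_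
  simpa using K.mul_mem (hXK hx.1) (K.inv_mem g.2)

theorem groupFlat_iff_groupFlat_subgroup (hS : S.IsAdmissible)
    (hG : ∃ (n : ℕ) (π : List (Fin n) → G), FreeHomOnto G π) (H : Subgroup G) [H.FiniteIndex] :
    GroupFlat S G ↔ GroupFlat S H :=
  ⟨hS.groupFlat_subgroup_of_groupFlat hG H, hS.groupFlat_of_groupFlat_subgroup H⟩

end SubsetPred.IsAdmissible

section Admissible

variable {C : LangClass} {n m : ℕ} {M : Type}

theorem CForall.of_freeHomOnto (hC : IsCone C) [Monoid M] {π : List (Fin n) → M}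
    {π' : List (Fin m) → M} (hπ : FreeHomOnto M π) (hπ' : FreeHomOnto M π') {X : Set M}
    (h : CForall C π X) : CForall C π' X := by
  obtain ⟨f, hf⟩ := hπ.exists_flatMap_eq hπ' (MonoidHom.id M)
  have hpre : {w | π' w ∈ X} = {w | w.flatMap f ∈ {w | π w ∈ X}} := by
    ext w
    simp [hf]
  rw [CForall, hpre]
  exact hC.2.1 m n f _ h

theorem CExists.of_freeHomOnto (hC : IsCone C) [Monoid M] {π : List (Fin n) → M}
    {π' : List (Fin m) → M} (hπ : FreeHomOnto M π) (hπ' : FreeHomOnto M π') {X : Set M}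
    (h : CExists C π X) : CExists C π' X := by
  obtain ⟨f, hf⟩ := hπ'.exists_flatMap_eq hπ (MonoidHom.id M)
  obtain ⟨L, hL, rfl⟩ := h
  exact ⟨_, hC.1 n m f L hL, by rw [Set.image_image]; exact Set.image_congr fun w _ => hf w⟩

theorem CForall.iff_of_freeHomOnto (hC : IsCone C) [Monoid M] {π : List (Fin n) → M}
    {π' : List (Fin m) → M} (hπ : FreeHomOnto M π) (hπ' : FreeHomOnto M π') (X : Set M) :
    CForall C π X ↔ CForall C π' X :=
  ⟨of_freeHomOnto hC hπ hπ', of_freeHomOnto hC hπ' hπ⟩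

theorem CExists.iff_of_freeHomOnto (hC : IsCone C) [Monoid M] {π : List (Fin n) → M}
    {π' : List (Fin m) → M} (hπ : FreeHomOnto M π) (hπ' : FreeHomOnto M π') (X : Set M) :
    CExists C π X ↔ CExists C π' X :=
  ⟨of_freeHomOnto hC hπ hπ', of_freeHomOnto hC hπ' hπ⟩

variable [Group M] {π : List (Fin n) → M}

theorem CForall.mul_right (hC : IsCone C) (hπ : FreeHomOnto M π) (g : M) {X : Set M}
    (h : CForall C π X) : CForall C π {x | x * g ∈ X} := by
  obtain ⟨u, rfl⟩ := hπ.surjective g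
  have hpre : {w | π w ∈ {x | x * π u ∈ X}} = (· ++ []) '' {w | w ++ u ∈ {w | π w ∈ X}} := by
    simp [hπ.map_append]
  rw [CForall, hpre]
  exact hC.image_append_mem h u []

theorem CExists.mul_right (hC : IsCone C) (hπ : FreeHomOnto M π) (g : M) {X : Set M}
    (h : CExists C π X) : CExists C π {x | x * g ∈ X} := by
  obtain ⟨u, hu⟩ := hπ.surjective g⁻¹
  obtain ⟨L, hL, rfl⟩ := h
  refine ⟨(· ++ u) '' {w | w ++ [] ∈ L}, hC.image_append_mem hL [] u, ?_⟩
  ext x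
  simp [hπ.map_append, hu, mul_inv_eq_iff_eq_mul]

theorem CForall.inter (hC : IsCone C) {X Z : Set M} (hZ : IsRegularLang {w | π w ∈ Z})
    (h : CForall C π X) : CForall C π (X ∩ Z) :=
  hC.2.2 n _ h _ hZ

theorem CExists.inter (hC : IsCone C) {X Z : Set M} (hZ : IsRegularLang {w | π w ∈ Z})
    (h : CExists C π X) : CExists C π (X ∩ Z) := by
  obtain ⟨L, hL, rfl⟩ := h
  exact ⟨L ∩ {w | π w ∈ Z}, hC.2.2 n L hL _ hZ, Set.image_inter_preimage π L Z⟩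

theorem CForall.sUnion (hU : ClosedUnderUnion C) {𝒴 : Set (Set M)} (hfin : 𝒴.Finite)
    (hne : 𝒴.Nonempty) (h : ∀ Y ∈ 𝒴, CForall C π Y) : CForall C π (⋃₀ 𝒴) := by
  have hpre : {w | π w ∈ ⋃₀ 𝒴} = ⋃₀ ((fun Y => {w | π w ∈ Y}) '' 𝒴) := by
    ext
    simp
  rw [CForall, hpre]
  exact hU.sUnion_mem (hfin.image _) (hne.image _) (Set.image_subset_iff.mpr h)

theorem CExists.sUnion (hU : ClosedUnderUnion C) {𝒴 : Set (Set M)} (hfin : 𝒴.Finite)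
    (hne : 𝒴.Nonempty) (h : ∀ Y ∈ 𝒴, CExists C π Y) : CExists C π (⋃₀ 𝒴) := by
  choose! L hL hLY using h
  refine ⟨⋃₀ (L '' 𝒴), hU.sUnion_mem (hfin.image L) (hne.image L) (Set.image_subset_iff.mpr hL),
    ?_⟩
  rw [Set.sUnion_image, Set.image_iUnion₂, Set.sUnion_eq_biUnion]
  exact Set.iUnion₂_congr hLY

def cForallPred (C : LangClass) : SubsetPred := fun _ _ _ π X => CForall C π X

def cExistsPred (C : LangClass) : SubsetPred := fun _ _ _ π X => CExists C π X

theorem flatAt_cForallPred (hC : IsCone C) (H : Subgroup M) [H.FiniteIndex] :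
    FlatAt (cForallPred C) H := fun _ _ _ _ hπ hρ _ hX =>
  ((isRegularSection_schreier hπ).cForall_iff hC hπ (freeHomOnto_schreierPres hπ) hX).trans
    (CForall.iff_of_freeHomOnto hC (freeHomOnto_schreierPres hπ) hρ _)

theorem flatAt_cExistsPred (hC : IsCone C) (H : Subgroup M) [H.FiniteIndex] :
    FlatAt (cExistsPred C) H := fun _ _ _ _ hπ hρ _ hX =>
  ((isRegularSection_schreier hπ).cExists_iff hC hπ (freeHomOnto_schreierPres hπ) hX).trans
    (CExists.iff_of_freeHomOnto hC (freeHomOnto_schreierPres hπ) hρ _)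

theorem isAdmissible_cForallPred (hC : IsFullSemiAFL C) :
    (cForallPred C).IsAdmissible where
  preimage_mulEquiv_iff _ _ _ := Iff.rfl
  mul_right hπ g _ := CForall.mul_right hC.1 hπ g
  inter := CForall.inter hC.1
  sUnion := CForall.sUnion hC.2
  flatAt := flatAt_cForallPred hC.1

theorem isAdmissible_cExistsPred (hC : IsFullSemiAFL C) :
    (cExistsPred C).IsAdmissible where
  preimage_mulEquiv_iff ρ φ Y := exists_congr fun _ => and_congr_right fun _ => by
    rw [Set.eq_preimage_iff_image_eq φ.bijective, Set.image_image]
  mul_right hπ g _ := CExists.mul_right hC.1 hπ g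
  inter := CExists.inter hC.1
  sUnion := CExists.sUnion hC.2
  flatAt := flatAt_cExistsPred hC.1

end Admissible

/-- Let `C` be a full semi-AFL, `G` a finitely generated group and
`H ≤ G` a subgroup of finite index.  Then, for each `• ∈ {∀, ∃}`, `G` is `C^•`-flat
(as a group) iff `H` is `C^•`-flat (as a group). -/
theorem stmt15 (C : LangClass) (hC : IsFullSemiAFL C)
    {G : Type} [Group G]
    (hGfg : ∃ (n : ℕ) (π : List (Fin n) → G), FreeHomOnto G π)
    (H : Subgroup G) (hfi : H.FiniteIndex) :
    (GroupCForallFlat C G ↔ GroupCForallFlat C ↥H) ∧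
    (GroupCExistsFlat C G ↔ GroupCExistsFlat C ↥H) :=
  ⟨(isAdmissible_cForallPred hC).groupFlat_iff_groupFlat_subgroup hGfg H,
    (isAdmissible_cExistsPred hC).groupFlat_iff_groupFlat_subgroup hGfg H⟩
end

section
/- Let 𝐂 be a class of languages closed under inverse homomorphism such that every language in 𝐂 is decidable (recursive), and let G be a finitely generated group with surjection π : A* → G for a finite generating set A. Assume that the word problem of G lies in 𝐂 (i.e. π⁻¹(1) ∈ 𝐂), and that there is a finitely generated subgroup H ≤ G whose membership problem in G is undecidable (i.e. the language π⁻¹(H) ⊆ A* is not decidable). Then G is not 𝐂^∀-flat (as a group). -/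
/-- Let `C` be closed under inverse homomorphism and consist only of
decidable (recursive) languages.  Let `G` be a finitely generated group whose word
problem lies in `C`, and suppose there is a finitely generated subgroup `H ≤ G` whose
membership problem `π⁻¹(H)` is undecidable.  Then `G` is not `C^∀`-flat as a group. -/
theorem stmt16 (C : LangClass) (hC : ClosedUnderInvHom C)
    (hCdec : ∀ n : ℕ, ∀ L ∈ C n, ComputablePred (fun w : List (Fin n) => w ∈ L))
    {G : Type} [Group G] {n : ℕ} (π : List (Fin n) → G) (hπ : FreeHomOnto G π)
    (hWP : {w : List (Fin n) | π w = 1} ∈ C n)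
    (H : Subgroup G)
    (hHfg : ∃ (k : ℕ) (ρ : List (Fin k) → ↥H), FreeHomOnto (↥H) ρ)
    (hund : ¬ ComputablePred (fun w : List (Fin n) => π w ∈ H)) :
    ¬ GroupCForallFlat C G := by
  intro hflat
  obtain ⟨k, ρ, hρ⟩ := hHfg
  have hiff := hflat H n k π ρ hπ hρ (H : Set G) (fun _ h => h)
  -- the full language over `Fin k` is in `C k`
  have huniv : {w : List (Fin k) | w.flatMap (fun _ => ([] : List (Fin n))) ∈
      {w : List (Fin n) | π w = 1}} ∈ C k := hC k n (fun _ => []) _ hWP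
  have hflatmap : ∀ w : List (Fin k), w.flatMap (fun _ => ([] : List (Fin n))) = [] := by
    intro w; induction w with
    | nil => rfl
    | cons a t ih => simp [ih]
  have hρH : CForall C ρ (Subtype.val ⁻¹' (H : Set G)) := by
    unfold CForall
    have : {w : List (Fin k) | ρ w ∈ Subtype.val ⁻¹' (H : Set G)} =
        {w : List (Fin k) | w.flatMap (fun _ => ([] : List (Fin n))) ∈
          {w : List (Fin n) | π w = 1}} := by
      ext w
      simp [hflatmap w, hπ.map_nil, Set.mem_preimage, (ρ w).property]
    rw [this]; exact huniv
  have hπH : CForall C π (H : Set G) := hiff.mpr hρH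
  exact hund (hCdec n _ hπH)
end

section
/- Let G be a finitely generated group. Then G is REC^∀-flat as a group if and only if G has decidable subgroup membership problem, i.e. for every finitely generated subgroup H ≤ G the language π⁻¹(H) ⊆ A* of words over a finite generating set A of G representing elements of H is decidable. -/
/-- The class `REC` of decidable (recursive) languages over finite alphabets. -/
def RECClass : LangClass := fun n => {L | ComputablePred (fun w : List (Fin n) => w ∈ L)}


/-! Flatness applied to `X = H` itself says that `π⁻¹(H)` is decidable. Conversely, assume all
subgroup membership problems are decidable, in particular the word problem (`H = 1`). A decidable
subset of `G` pulls back to a decidable subset of `H`, by translating the generators of `H` into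
words over those of `G`. In the other direction, to decide whether a word `w` over the generators
of `G` represents an element of `X ⊆ H`, first decide whether it represents an element of `H`; if
so, search for a word `v` over the generators of `H` representing the same element (candidates are
checked with the word problem, and the search terminates because `H` is generated by them), then
decide whether `v` represents an element of `X`. -/

namespace ComputablePred

variable {α β : Type*} [Primcodable α] [Primcodable β]

theorem comp {p : β → Prop} (hp : ComputablePred p) {f : α → β} (hf : Computable f) :
    ComputablePred fun a => p (f a) :=
  computable_of_manyOneReducible (ManyOneReducible.mk p hf) hp

theorem and {p q : α → Prop} (hp : ComputablePred p) (hq : ComputablePred q) :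
    ComputablePred fun a => p a ∧ q a := by
  classical
  exact Computable.computablePred <|
    (Primrec.and.to_comp.comp hp.decide hq.decide).of_eq fun a => (Bool.decide_and _ _).symm

theorem or {p q : α → Prop} (hp : ComputablePred p) (hq : ComputablePred q) :
    ComputablePred fun a => p a ∨ q a := by
  classical
  exact Computable.computablePred <|
    (Primrec.or.to_comp.comp hp.decide hq.decide).of_eq fun a => (Bool.decide_or _ _).symm

end ComputablePred

theorem Computable.exists_of_forall_exists {α β : Type*} [Primcodable α] [Primcodable β]
    {R : α → β → Prop} (hR : ComputablePred fun x : α × β => R x.1 x.2)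
    (hex : ∀ a, ∃ b, R a b) : ∃ f : α → β, Computable f ∧ ∀ a, R a (f a) := by
  classical
  let g : α → ℕ → Option β := fun a m =>
    (Encodable.decode m).bind fun b => bif decide (R a b) then some b else none
  have hRdec : Computable fun x : (α × ℕ) × β => decide (R x.1.1 x.2) :=
    (hR.decide.comp (g := fun x : (α × ℕ) × β => (x.1.1, x.2))
      ((Computable.fst.comp Computable.fst).pair Computable.snd) :)
  have hg : Computable₂ g :=
    Computable.option_bind (Computable.decode.comp Computable.snd) <|
      Computable.cond hRdec (Computable.option_some.comp Computable.snd) (Computable.const none)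
  have hdom : ∀ a, (Nat.rfindOpt (g a)).Dom := fun a =>
    let ⟨b, hb⟩ := hex a
    Nat.rfindOpt_dom.2 ⟨Encodable.encode b, b, by simp [g, hb]⟩
  refine ⟨fun a => (Nat.rfindOpt (g a)).get (hdom a),
    (Partrec.rfindOpt hg).of_eq_tot fun a => Part.get_mem _, fun a => ?_⟩
  obtain ⟨m, hm⟩ := Nat.rfindOpt_spec (Part.get_mem (hdom a))
  dsimp only
  simp only [g, Option.mem_def, Option.bind_eq_some_iff] at hm
  obtain ⟨b, -, hb⟩ := hm
  by_cases hRb : R a b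
  · simp only [hRb, decide_true, cond_true, Option.some_inj] at hb
    exact hb ▸ hRb
  · simp [hRb] at hb

theorem ComputablePred.of_witness {α β : Type*} [Primcodable α] [Primcodable β]
    {D P : α → Prop} {R : α → β → Prop} {Q : β → Prop} (hD : ComputablePred D)
    (hR : ComputablePred fun x : α × β => R x.1 x.2) (hQ : ComputablePred Q)
    (hPD : ∀ a, P a → D a) (hDR : ∀ a, D a → ∃ b, R a b)
    (hRQ : ∀ a b, R a b → (P a ↔ Q b)) :
    ComputablePred P := by
  rcases isEmpty_or_nonempty β with hβ | ⟨⟨b₀⟩⟩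
  · refine (Computable.computablePred (p := fun _ : α => False) (Computable.const false)).of_eq
      fun a => ?_
    simpa using fun hP => (hDR a (hPD a hP)).elim fun b _ => hβ.false b
  obtain ⟨f, hf, hfR⟩ := Computable.exists_of_forall_exists (R := fun a b => ¬D a ∨ R a b)
    ((hD.not.comp Computable.fst).or hR)
    fun a => (em (D a)).elim (fun h => (hDR a h).imp fun _ => Or.inr) fun h => ⟨b₀, Or.inl h⟩
  have hPQ : ∀ a, D a → (P a ↔ Q (f a)) := fun a hDa =>
    hRQ a _ ((hfR a).resolve_left (not_not.2 hDa))
  exact (hD.and (hQ.comp hf)).of_eq fun a =>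
    ⟨fun h => (hPQ a h.1).2 h.2, fun hP => ⟨hPD a hP, (hPQ a (hPD a hP)).1 hP⟩⟩

theorem Primrec.list_flatMap_of_finite {α β : Type*} [Primcodable α] [Finite α] [Primcodable β]
    (f : α → List β) : Primrec fun w : List α => w.flatMap f :=
  Primrec.list_flatMap Primrec.id ((Primrec.dom_finite f).comp Primrec.snd).to₂

theorem closedUnderInvHom_RECClass : ClosedUnderInvHom RECClass := fun _ _ f _ hL =>
  hL.comp (Primrec.list_flatMap_of_finite f).to_comp

namespace FreeHomOnto

variable {n : ℕ} {M : Type} [Monoid M] {π : List (Fin n) → M}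

theorem apply_eq_prod_map (hπ : FreeHomOnto M π) (w : List (Fin n)) :
    π w = (w.map fun i => π [i]).prod := by
  induction w with
  | nil => exact hπ.map_nil
  | cons i w ih =>
    rw [List.map_cons, List.prod_cons, ← ih, ← hπ.map_append, List.singleton_append]

theorem exists_flatMap_eq_prod_map (hπ : FreeHomOnto M π) {m : ℕ} (g : Fin m → M) :
    ∃ f : Fin m → List (Fin n), ∀ w : List (Fin m), π (w.flatMap f) = (w.map g).prod := by
  choose f hf using fun i => hπ.surjective (g i)
  refine ⟨f, fun w => ?_⟩
  induction w with
  | nil => exact hπ.map_nil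
  | cons i w ih => rw [List.flatMap_cons, hπ.map_append, ih, hf, List.map_cons, List.prod_cons]

theorem map_apply_eq_prod_map (hπ : FreeHomOnto M π) {N : Type} [Monoid N] (φ : M →* N)
    (w : List (Fin n)) : φ (π w) = (w.map fun i => φ (π [i])).prod := by
  rw [hπ.apply_eq_prod_map w, map_list_prod, List.map_map]
  rfl

theorem of_subsingleton [Subsingleton M] : FreeHomOnto M fun _ : List (Fin n) => 1 :=
  ⟨rfl, fun _ _ => (mul_one 1).symm, fun _ => ⟨[], Subsingleton.elim _ _⟩⟩

end FreeHomOnto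

theorem CForall.setOf_prod_map_mem {C : LangClass} (hC : ClosedUnderInvHom C) {n m : ℕ}
    {M : Type} [Monoid M] {π : List (Fin n) → M} (hπ : FreeHomOnto M π) {X : Set M}
    (hX : CForall C π X) (g : Fin m → M) :
    {w : List (Fin m) | (w.map g).prod ∈ X} ∈ C m := by
  obtain ⟨f, hf⟩ := hπ.exists_flatMap_eq_prod_map g
  simpa only [Set.mem_ofPred_eq, hf] using hC m n f _ hX

theorem CForall.preimage {C : LangClass} (hC : ClosedUnderInvHom C) {n m : ℕ}
    {M N : Type} [Monoid M] [Monoid N] {π : List (Fin n) → M} {ρ : List (Fin m) → N}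
    (hπ : FreeHomOnto M π) (hρ : FreeHomOnto N ρ) (φ : N →* M) {X : Set M}
    (hX : CForall C π X) : CForall C ρ (φ ⁻¹' X) := by
  have hset : {v | ρ v ∈ φ ⁻¹' X} = {v | (v.map fun j => φ (ρ [j])).prod ∈ X} := by
    ext v
    rw [Set.mem_ofPred_eq, Set.mem_ofPred_eq, Set.mem_preimage, hρ.map_apply_eq_prod_map]
  rw [CForall, hset]
  exact hX.setOf_prod_map_mem hC hπ _

theorem computablePred_prod_map_eq_of_word_problem {n : ℕ} {G : Type} [Group G]
    {π : List (Fin n) → G} (hπ : FreeHomOnto G π) (hwp : ComputablePred fun w => π w = 1)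
    {a b : ℕ} (g₁ : Fin a → G) (g₂ : Fin b → G) :
    ComputablePred fun p : List (Fin a) × List (Fin b) =>
      (p.1.map g₁).prod = (p.2.map g₂).prod := by
  obtain ⟨f₁, hf₁⟩ := hπ.exists_flatMap_eq_prod_map g₁
  obtain ⟨f₂, hf₂⟩ := hπ.exists_flatMap_eq_prod_map fun j => (g₂ j)⁻¹
  have hword : ∀ p : List (Fin a) × List (Fin b),
      π (p.1.flatMap f₁ ++ p.2.reverse.flatMap f₂) =
        (p.1.map g₁).prod * ((p.2.map g₂).prod)⁻¹ := by
    intro p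
    rw [hπ.map_append, hf₁, hf₂, List.prod_inv_reverse, List.map_reverse, List.map_map]
    rfl
  have hcomp : Computable fun p : List (Fin a) × List (Fin b) =>
      p.1.flatMap f₁ ++ p.2.reverse.flatMap f₂ :=
    (Primrec.list_append.comp ((Primrec.list_flatMap_of_finite f₁).comp Primrec.fst)
      ((Primrec.list_flatMap_of_finite f₂).comp (Primrec.list_reverse.comp Primrec.snd))).to_comp
  exact (hwp.comp hcomp).of_eq fun p => by rw [hword, mul_inv_eq_one]

theorem CForall.recClass_of_subgroup {G : Type} [Group G] {n n' k : ℕ}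
    {π : List (Fin n) → G} {π' : List (Fin n') → G} {H : Subgroup G} {ρ : List (Fin k) → H}
    (hπ : FreeHomOnto G π) (hπ' : FreeHomOnto G π') (hρ : FreeHomOnto H ρ)
    (hmem : ComputablePred fun w => π w ∈ H) (hwp : ComputablePred fun w => π w = 1)
    {X : Set G} (hX : X ⊆ H) (hXρ : CForall RECClass ρ (Subtype.val ⁻¹' X)) :
    CForall RECClass π' X := by
  have hD : ComputablePred fun w => π' w ∈ H :=
    CForall.preimage closedUnderInvHom_RECClass hπ hπ' (MonoidHom.id G)
      (hmem : CForall RECClass π (H : Set G))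
  have hR : ComputablePred fun p : List (Fin n') × List (Fin k) => (ρ p.2 : G) = π' p.1 :=
    (computablePred_prod_map_eq_of_word_problem hπ hwp (fun i => π' [i])
      fun j => H.subtype (ρ [j])).of_eq fun p => by
        rw [← hπ'.apply_eq_prod_map, ← hρ.map_apply_eq_prod_map H.subtype]
        exact eq_comm
  refine ComputablePred.of_witness (R := fun w v => (ρ v : G) = π' w) hD hR hXρ
    (fun w h => hX h) (fun w hw => ?_) fun w v h => show π' w ∈ X ↔ (ρ v : G) ∈ X by rw [h]
  obtain ⟨v, hv⟩ := hρ.surjective ⟨π' w, hw⟩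
  exact ⟨v, congrArg Subtype.val hv⟩

/-- A finitely generated group `G` is `REC^∀`-flat as a group iff
`G` has decidable subgroup membership problem: for every finitely generated subgroup
`H ≤ G`, the language `π⁻¹(H)` of words representing elements of `H` is decidable. -/
theorem stmt17 {G : Type} [Group G] {n : ℕ}
    (π : List (Fin n) → G) (hπ : FreeHomOnto G π) :
    GroupCForallFlat RECClass G ↔
      ∀ H : Subgroup G, (∃ (k : ℕ) (ρ : List (Fin k) → ↥H), FreeHomOnto (↥H) ρ) →
        ComputablePred (fun w : List (Fin n) => π w ∈ H) := by
  constructor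
  · intro hflat H ⟨k, ρ, hρ⟩
    refine (hflat H n k π ρ hπ hρ H subset_rfl).2 ?_
    exact (Computable.computablePred (p := fun _ => True) (Computable.const true)).of_eq
      fun v => iff_of_true trivial (ρ v).2
  · intro hdec H n' k π' ρ hπ' hρ X hX
    have hwp : ComputablePred fun w => π w = 1 :=
      (hdec ⊥ ⟨0, _, FreeHomOnto.of_subsingleton⟩).of_eq fun _ => Subgroup.mem_bot
    exact ⟨CForall.preimage closedUnderInvHom_RECClass hπ' hρ H.subtype,
      CForall.recClass_of_subgroup hπ hπ' hρ (hdec H ⟨k, ρ, hρ⟩) hwp hX⟩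
end
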